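/- Let R be a commutative local ring and let s ∈ U(R). Then the ring K_s(R) is quasipolar if and only if K_s(R) is strongly clean. -/

import Mathlib

/-- The generalized matrix ring `K_s(R)` with multiplier `s`. -/
@[ext]
structure GenMatrix (R : Type*) (s : R) where
  a : R
  b : R
  c : R
  d : R

namespace GenMatrix

variable {R : Type*} [Ring R] {s : R}

instance : Add (GenMatrix R s) :=
  ⟨fun X Y => ⟨X.a + Y.a, X.b + Y.b, X.c + Y.c, X.d + Y.d⟩⟩
instance : Neg (GenMatrix R s) := ⟨fun X => ⟨-X.a, -X.b, -X.c, -X.d⟩⟩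
instance : Zero (GenMatrix R s) := ⟨⟨0, 0, 0, 0⟩⟩
instance : One (GenMatrix R s) := ⟨⟨1, 0, 0, 1⟩⟩
instance : Mul (GenMatrix R s) :=
  ⟨fun X Y => ⟨X.a * Y.a + s * (X.b * Y.c), X.a * Y.b + X.b * Y.d,
    X.c * Y.a + X.d * Y.c, s * (X.c * Y.b) + X.d * Y.d⟩⟩

@[simp] lemma add_a (X Y : GenMatrix R s) : (X + Y).a = X.a + Y.a := rfl
@[simp] lemma add_b (X Y : GenMatrix R s) : (X + Y).b = X.b + Y.b := rfl
@[simp] lemma add_c (X Y : GenMatrix R s) : (X + Y).c = X.c + Y.c := rfl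
@[simp] lemma add_d (X Y : GenMatrix R s) : (X + Y).d = X.d + Y.d := rfl
@[simp] lemma neg_a (X : GenMatrix R s) : (-X).a = -X.a := rfl
@[simp] lemma neg_b (X : GenMatrix R s) : (-X).b = -X.b := rfl
@[simp] lemma neg_c (X : GenMatrix R s) : (-X).c = -X.c := rfl
@[simp] lemma neg_d (X : GenMatrix R s) : (-X).d = -X.d := rfl
@[simp] lemma zero_a : (0 : GenMatrix R s).a = 0 := rfl
@[simp] lemma zero_b : (0 : GenMatrix R s).b = 0 := rfl
@[simp] lemma zero_c : (0 : GenMatrix R s).c = 0 := rfl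
@[simp] lemma zero_d : (0 : GenMatrix R s).d = 0 := rfl
@[simp] lemma one_a : (1 : GenMatrix R s).a = 1 := rfl
@[simp] lemma one_b : (1 : GenMatrix R s).b = 0 := rfl
@[simp] lemma one_c : (1 : GenMatrix R s).c = 0 := rfl
@[simp] lemma one_d : (1 : GenMatrix R s).d = 1 := rfl
@[simp] lemma mul_a (X Y : GenMatrix R s) : (X * Y).a = X.a * Y.a + s * (X.b * Y.c) := rfl
@[simp] lemma mul_b (X Y : GenMatrix R s) : (X * Y).b = X.a * Y.b + X.b * Y.d := rfl
@[simp] lemma mul_c (X Y : GenMatrix R s) : (X * Y).c = X.c * Y.a + X.d * Y.c := rfl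
@[simp] lemma mul_d (X Y : GenMatrix R s) : (X * Y).d = s * (X.c * Y.b) + X.d * Y.d := rfl

instance : AddCommGroup (GenMatrix R s) where
  add_assoc X Y Z := by ext <;> simp [add_assoc]
  zero_add X := by ext <;> simp
  add_zero X := by ext <;> simp
  add_comm X Y := by ext <;> simp [add_comm]
  neg_add_cancel X := by ext <;> simp
  nsmul := nsmulRec
  zsmul := zsmulRec

section Central

variable [Fact (s ∈ Set.center R)]

lemma scomm (r : R) : r * s = s * r := Semigroup.mem_center_iff.mp Fact.out r

lemma sshift (r t : R) : r * (s * t) = s * (r * t) := by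
  rw [← mul_assoc, scomm (s := s), mul_assoc]

instance : Ring (GenMatrix R s) where
  __ := (inferInstance : AddCommGroup (GenMatrix R s))
  left_distrib X Y Z := by ext <;> simp [mul_add, add_mul] <;> abel
  right_distrib X Y Z := by ext <;> simp [mul_add, add_mul] <;> abel
  zero_mul X := by ext <;> simp
  mul_zero X := by ext <;> simp
  mul_assoc X Y Z := by
    ext <;> simp only [mul_a, mul_b, mul_c, mul_d, mul_add, add_mul, mul_assoc, sshift] <;> abel
  one_mul X := by ext <;> simp
  mul_one X := by ext <;> simp

end Central

instance central_of_comm {R : Type*} [CommRing R] (s : R) : Fact (s ∈ Set.center R) :=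
  ⟨by rw [Set.center_eq_univ]; trivial⟩

/-- `det_s` of a generalized matrix over a commutative ring. -/
def dets {R : Type*} {s : R} [CommRing R] (A : GenMatrix R s) : R :=
  A.a * A.d - s * (A.b * A.c)

/-- The trace of a generalized matrix. -/
def tr {R : Type*} {s : R} [Ring R] (A : GenMatrix R s) : R := A.a + A.d

end GenMatrix

/-- An element `a` is quasinilpotent if `1 + a*x` is a unit for every `x` commuting with `a`. -/
def IsQuasinilpotent {R : Type*} [Ring R] (a : R) : Prop :=
  ∀ x : R, a * x = x * a → IsUnit (1 + a * x)

/-- An element `a` is quasipolar if there is an idempotent `p` in the double commutant of `a`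
with `a + p` a unit and `a * p` quasinilpotent. -/
def IsQuasipolar {R : Type*} [Ring R] (a : R) : Prop :=
  ∃ p : R, IsIdempotentElem p ∧ (∀ y : R, y * a = a * y → p * y = y * p) ∧
    IsUnit (a + p) ∧ IsQuasinilpotent (a * p)

/-- A ring is quasipolar if every element is quasipolar. -/
def IsQuasipolarRing (R : Type*) [Ring R] : Prop := ∀ a : R, IsQuasipolar a

/-- An element is strongly clean if it is the sum of an idempotent and a unit that commute. -/
def IsStronglyClean {R : Type*} [Ring R] (a : R) : Prop :=
  ∃ e u : R, IsIdempotentElem e ∧ IsUnit u ∧ a = e + u ∧ e * u = u * e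

/-- A ring is strongly clean if every element is strongly clean. -/
def IsStronglyCleanRing (R : Type*) [Ring R] : Prop := ∀ a : R, IsStronglyClean a

/-- `a` is similar to `b` if `b = u⁻¹ * a * u` for some unit `u`. -/
def IsSimilar {R : Type*} [Ring R] (a b : R) : Prop :=
  ∃ u : Rˣ, b = ↑u⁻¹ * a * ↑u

/-- The Jacobson radical of a ring: the intersection of all maximal left ideals. -/
def JacobsonRadical (R : Type*) [Ring R] : Ideal R := Ideal.jacobson ⊥

/-!
Quasipolar elements are strongly clean in any ring: `a - p` is a unit because it agrees with the
unit `a + p` on `1 - p` and with the unit `-(1 - a p)` on `p`.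

Conversely, let `R` be local and `A ∈ K_s(R)`. If `dets A` is a unit, so is `A` (take `p = 0`).
If `tr A` and `dets A` lie in the maximal ideal `m`, then by Cayley–Hamilton `A²` has entries in
`m`, so `A` is quasinilpotent (take `p = 1`). Otherwise the characteristic polynomial
`z² - tr A z + dets A` is `z (z - tr A)` modulo `m`; it splits over `R` with roots `α ∈ m` and
`β` a unit as soon as every equation `z² - z = e` with `e ∈ m` has a root, and then the spectral
idempotent `(A - β) / (α - β)` makes `A` quasipolar. Those roots come from strong cleanness: the
idempotent in a strongly clean decomposition of `B = [[0, 1], [s⁻¹ e, 1]]` cannot be `0` or `1`,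
as `dets B = dets (B - 1) = -e` is not a unit, so it has trace `1` and determinant `0`, and its
entries produce a root.
-/

section Ring

variable {S : Type*} [Ring S]

theorem isUnit_mul_one_sub_add_mul {p x y : S} (hp : IsIdempotentElem p) (hx : IsUnit x)
    (hy : IsUnit y) (hxp : Commute x p) (hyp : Commute y p) :
    IsUnit (x * (1 - p) + y * p) := by
  obtain ⟨u, rfl⟩ := hx
  obtain ⟨v, rfl⟩ := hy
  have hpq : p * (1 - p) = 0 := by rw [mul_sub, mul_one, hp.eq, sub_self]
  have hqp : (1 - p) * p = 0 := by rw [sub_mul, one_mul, hp.eq, sub_self]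
  have hq : (1 - p) * (1 - p) = 1 - p := hp.one_sub.eq
  have hpu : Commute p ↑u⁻¹ := hxp.symm.units_inv_right
  have hpv : Commute p ↑v⁻¹ := hyp.symm.units_inv_right
  have hqu : Commute (1 - p) ↑u⁻¹ := (Commute.one_left _).sub_left hpu
  have hqv : Commute (1 - p) ↑v⁻¹ := (Commute.one_left _).sub_left hpv
  have hqu' : Commute (1 - p) ↑u := (Commute.one_left _).sub_left hxp.symm
  have hqv' : Commute (1 - p) ↑v := (Commute.one_left _).sub_left hyp.symm
  refine isUnit_iff_exists.mpr ⟨↑u⁻¹ * (1 - p) + ↑v⁻¹ * p, ?_, ?_⟩ <;>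
    simp only [mul_add, add_mul, mul_assoc, hpu.left_comm, hpv.left_comm, hqu.left_comm,
      hqv.left_comm, hxp.symm.left_comm, hyp.symm.left_comm, hqu'.left_comm, hqv'.left_comm,
      hp.eq, hq, hpq, hqp, mul_zero, add_zero, zero_add, Units.mul_inv_cancel_left,
      Units.inv_mul_cancel_left, sub_add_cancel]

theorem IsQuasipolar.isStronglyClean {a : S} (h : IsQuasipolar a) : IsStronglyClean a := by
  obtain ⟨p, hp, hcomm, hu, hq⟩ := h
  have hap : Commute a p := (hcomm a rfl).symm
  have hg : IsUnit (1 - a * p) := by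
    have := hq (-p) (by simp only [mul_neg, neg_mul, mul_assoc, hap.symm.left_comm, hp.eq])
    rwa [mul_neg, mul_assoc, hp.eq, ← sub_eq_add_neg] at this
  have hdecomp : a - p = (a + p) * (1 - p) + -(1 - a * p) * p := by
    simp only [mul_sub, sub_mul, add_mul, mul_one, one_mul, neg_mul, mul_assoc, hp.eq]
    abel
  refine ⟨p, a - p, hp, ?_, by abel, by rw [mul_sub, sub_mul, hp.eq, hap.eq]⟩
  rw [hdecomp]
  exact isUnit_mul_one_sub_add_mul hp hu hg.neg (hap.add_left (Commute.refl p))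
    (((Commute.one_left p).sub_left (hap.mul_left (Commute.refl p))).neg_left)

theorem IsUnit.isQuasipolar {a : S} (h : IsUnit a) : IsQuasipolar a :=
  ⟨0, .zero, by simp, by simpa using h, fun x _ => by simp⟩

theorem IsQuasinilpotent.isQuasipolar {a : S} (h : IsQuasinilpotent a) : IsQuasipolar a :=
  ⟨1, .one, by simp, by simpa [add_comm] using h 1 (by simp), by rwa [mul_one]⟩

theorem isQuasinilpotent_of_forall_isUnit_one_add_mul_self_mul {a : S}
    (h : ∀ x, IsUnit (1 + a * a * x)) : IsQuasinilpotent a := by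
  intro x hx
  have hsq : (1 + a * x) * (1 - a * x) = 1 + a * a * -(x * x) := by
    have : a * x * (a * x) = a * a * (x * x) := by
      rw [mul_assoc, ← mul_assoc x, ← hx, mul_assoc, mul_assoc]
    rw [mul_neg, ← this]
    noncomm_ring
  have hcomm : Commute (1 + a * x) (1 - a * x) :=
    (Commute.one_left _).add_left ((Commute.one_right _).sub_right (Commute.refl _))
  exact (hcomm.isUnit_mul_iff.mp (hsq ▸ h _)).1

end Ring

namespace IsLocalRing

variable {R : Type*} [CommRing R] [IsLocalRing R]

theorem eq_zero_or_eq_one_of_isIdempotentElem {e : R} (he : IsIdempotentElem e) :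
    e = 0 ∨ e = 1 := by
  rcases isUnit_or_isUnit_one_sub_self e with h | h
  · exact .inr ((IsIdempotentElem.iff_eq_one_of_isUnit h).mp he)
  · exact .inl (sub_eq_self.mp ((IsIdempotentElem.iff_eq_one_of_isUnit h).mp he.one_sub))

theorem isUnit_add_of_mem_maximalIdeal {u x : R} (hu : IsUnit u) (hx : x ∈ maximalIdeal R) :
    IsUnit (u + x) :=
  notMem_maximalIdeal.mp fun h => notMem_maximalIdeal.mpr hu (by simpa using sub_mem h hx)

theorem exists_mem_maximalIdeal_sq_sub_self_eq {e y : R} (he : e ∈ maximalIdeal R)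
    (hy : y ^ 2 - y = e) : ∃ z ∈ maximalIdeal R, z ^ 2 - z = e := by
  have hmem : y * (y - 1) ∈ maximalIdeal R := by rwa [mul_sub_one, ← sq, hy]
  rcases (maximalIdeal.isMaximal R).isPrime.mem_or_mem hmem with h | h
  · exact ⟨y, h, hy⟩
  · exact ⟨1 - y, by simpa using neg_mem h, by rw [← hy]; ring⟩

end IsLocalRing

namespace GenMatrix

section Ring

variable {R : Type*} [Ring R] {s : R}

@[simp] lemma sub_a (X Y : GenMatrix R s) : (X - Y).a = X.a - Y.a := by
  simp [sub_eq_add_neg]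
@[simp] lemma sub_b (X Y : GenMatrix R s) : (X - Y).b = X.b - Y.b := by
  simp [sub_eq_add_neg]
@[simp] lemma sub_c (X Y : GenMatrix R s) : (X - Y).c = X.c - Y.c := by
  simp [sub_eq_add_neg]
@[simp] lemma sub_d (X Y : GenMatrix R s) : (X - Y).d = X.d - Y.d := by
  simp [sub_eq_add_neg]

end Ring

variable {R : Type*} [CommRing R] {s : R}

def scalar : R →+* GenMatrix R s where
  toFun r := ⟨r, 0, 0, r⟩
  map_one' := rfl
  map_mul' _ _ := by ext <;> simp
  map_zero' := rfl
  map_add' _ _ := by ext <;> simp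

@[simp] lemma scalar_a (r : R) : (scalar r : GenMatrix R s).a = r := rfl
@[simp] lemma scalar_b (r : R) : (scalar r : GenMatrix R s).b = 0 := rfl
@[simp] lemma scalar_c (r : R) : (scalar r : GenMatrix R s).c = 0 := rfl
@[simp] lemma scalar_d (r : R) : (scalar r : GenMatrix R s).d = r := rfl

theorem commute_scalar (r : R) (X : GenMatrix R s) : Commute (scalar r) X := by
  ext <;> simp only [mul_a, mul_b, mul_c, mul_d, scalar_a, scalar_b, scalar_c, scalar_d] <;> ring

def adj (X : GenMatrix R s) : GenMatrix R s := ⟨X.d, -X.b, -X.c, X.a⟩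

theorem mul_adj (X : GenMatrix R s) : X * adj X = scalar (dets X) := by
  ext <;> simp only [adj, dets, mul_a, mul_b, mul_c, mul_d, scalar_a, scalar_b, scalar_c,
    scalar_d] <;> ring

theorem adj_mul (X : GenMatrix R s) : adj X * X = scalar (dets X) := by
  ext <;> simp only [adj, dets, mul_a, mul_b, mul_c, mul_d, scalar_a, scalar_b, scalar_c,
    scalar_d] <;> ring

theorem dets_mul (X Y : GenMatrix R s) : dets (X * Y) = dets X * dets Y := by
  simp only [dets, mul_a, mul_b, mul_c, mul_d]; ring

def detsHom : GenMatrix R s →* R where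
  toFun := dets
  map_one' := by simp [dets]
  map_mul' := dets_mul

theorem isUnit_iff_isUnit_dets {X : GenMatrix R s} : IsUnit X ↔ IsUnit (dets X) := by
  refine ⟨fun h => h.map detsHom, fun h => ?_⟩
  obtain ⟨v, hv⟩ := h.exists_left_inv
  refine isUnit_iff_exists.mpr ⟨scalar v * adj X, ?_, ?_⟩
  · rw [(commute_scalar v X).symm.left_comm, mul_adj, ← map_mul, hv, map_one]
  · rw [mul_assoc, adj_mul, ← map_mul, hv, map_one]

theorem dets_one_add (X : GenMatrix R s) : dets (1 + X) = 1 + (tr X + dets X) := by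
  simp only [dets, tr, add_a, add_b, add_c, add_d, one_a, one_b, one_c, one_d]; ring

theorem tr_scalar_mul (r : R) (X : GenMatrix R s) : tr (scalar r * X) = r * tr X := by
  simp only [tr, mul_a, mul_d, scalar_a, scalar_b, scalar_c, scalar_d]; ring

theorem mul_self_eq_scalar_tr_mul_sub_scalar_dets (X : GenMatrix R s) :
    X * X = scalar (tr X) * X - scalar (dets X) := by
  ext <;> simp only [tr, dets, mul_a, mul_b, mul_c, mul_d, sub_a, sub_b, sub_c, sub_d, scalar_a,
    scalar_b, scalar_c, scalar_d] <;> ring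

def entrywise (I : Ideal R) : TwoSidedIdeal (GenMatrix R s) :=
  .mk' {X | X.a ∈ I ∧ X.b ∈ I ∧ X.c ∈ I ∧ X.d ∈ I} (by simp)
    (fun hX hY => by simp_all [I.add_mem])
    (fun hX => by simp_all)
    (fun ⟨ha, hb, hc, hd⟩ => ⟨
      I.add_mem (I.mul_mem_left _ ha) (I.mul_mem_left _ (I.mul_mem_left _ hc)),
      I.add_mem (I.mul_mem_left _ hb) (I.mul_mem_left _ hd),
      I.add_mem (I.mul_mem_left _ ha) (I.mul_mem_left _ hc),
      I.add_mem (I.mul_mem_left _ (I.mul_mem_left _ hb)) (I.mul_mem_left _ hd)⟩)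
    (fun ⟨ha, hb, hc, hd⟩ => ⟨
      I.add_mem (I.mul_mem_right _ ha) (I.mul_mem_left _ (I.mul_mem_right _ hb)),
      I.add_mem (I.mul_mem_right _ ha) (I.mul_mem_right _ hb),
      I.add_mem (I.mul_mem_right _ hc) (I.mul_mem_right _ hd),
      I.add_mem (I.mul_mem_left _ (I.mul_mem_right _ hc)) (I.mul_mem_right _ hd)⟩)

theorem mem_entrywise {I : Ideal R} {X : GenMatrix R s} :
    X ∈ entrywise I ↔ X.a ∈ I ∧ X.b ∈ I ∧ X.c ∈ I ∧ X.d ∈ I :=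
  TwoSidedIdeal.mem_mk' ..

theorem scalar_mem_entrywise {I : Ideal R} {r : R} (hr : r ∈ I) :
    (scalar r : GenMatrix R s) ∈ entrywise I :=
  mem_entrywise.mpr ⟨hr, I.zero_mem, I.zero_mem, hr⟩

section IsLocalRing

open IsLocalRing

variable [IsLocalRing R]

theorem isUnit_one_add_of_mem_entrywise {X : GenMatrix R s}
    (hX : X ∈ entrywise (maximalIdeal R)) : IsUnit (1 + X) := by
  obtain ⟨ha, hb, -, hd⟩ := mem_entrywise.mp hX
  rw [isUnit_iff_isUnit_dets, dets_one_add]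
  refine isUnit_add_of_mem_maximalIdeal isUnit_one (add_mem (add_mem ha hd) ?_)
  exact sub_mem (Ideal.mul_mem_right _ _ ha) (Ideal.mul_mem_left _ _ (Ideal.mul_mem_right _ _ hb))

theorem eq_zero_or_eq_one_or_tr_eq_one_of_isIdempotentElem {E : GenMatrix R s}
    (hE : IsIdempotentElem E) :
    E = 0 ∨ E = 1 ∨ (tr E = 1 ∧ dets E = 0) := by
  have hdets : IsIdempotentElem (dets E) := by
    rw [IsIdempotentElem, ← dets_mul, hE.eq]
  rcases eq_zero_or_eq_one_of_isIdempotentElem hdets with h0 | h1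
  · have hE' : E = scalar (tr E) * E := by
      conv_lhs => rw [← hE.eq, mul_self_eq_scalar_tr_mul_sub_scalar_dets, h0, map_zero, sub_zero]
    have htr : IsIdempotentElem (tr E) := by
      show tr E * tr E = tr E
      conv_rhs => rw [hE', tr_scalar_mul]
    rcases eq_zero_or_eq_one_of_isIdempotentElem htr with ht | ht
    · exact .inl (by rw [hE', ht, map_zero, zero_mul])
    · exact .inr (.inr ⟨ht, h0⟩)
  · exact .inr (.inl ((IsIdempotentElem.iff_eq_one_of_isUnit
      (isUnit_iff_isUnit_dets.mpr (h1 ▸ isUnit_one))).mp hE))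

theorem exists_sq_sub_self_eq_of_isStronglyClean {c e : R} (hc : s * c = e)
    (he : e ∈ maximalIdeal R) (hB : IsStronglyClean (⟨0, 1, c, 1⟩ : GenMatrix R s)) :
    ∃ y, y ^ 2 - y = e := by
  obtain ⟨E, U, hE, hU, hB, hEU⟩ := hB
  have hne : ¬IsUnit (-e) := (mem_maximalIdeal _).mp (neg_mem he)
  rcases eq_zero_or_eq_one_or_tr_eq_one_of_isIdempotentElem hE with rfl | rfl | ⟨htr, hdets⟩
  · rw [zero_add] at hB
    refine absurd (isUnit_iff_isUnit_dets.mp (hB ▸ hU)) ?_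
    simpa [dets, ← hc] using hne
  · refine absurd (isUnit_iff_isUnit_dets.mp (eq_sub_of_add_eq' hB.symm ▸ hU)) ?_
    simpa [dets, ← hc] using hne
  have hcomm : E * ⟨0, 1, c, 1⟩ = ⟨0, 1, c, 1⟩ * E := by rw [hB, mul_add, add_mul, hEU]
  have hca : s * (E.b * c) = s * E.c := by simpa using congrArg GenMatrix.a hcomm
  have hcb : E.a + E.b = E.d := by simpa using congrArg GenMatrix.b hcomm
  simp only [tr, dets] at htr hdets
  have hb : E.b = 1 - 2 * E.a := by linear_combination htr + hcb
  have hq : E.a * (1 - E.a) = e * E.b ^ 2 := by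
    linear_combination -E.a * htr + hdets - E.b * hca + E.b ^ 2 * hc
  -- `E.b = 1 - 2 E.a` squares to `(1 + 4 e)⁻¹`, so this is the root `(1 - E.b (1 + 4 e)) / 2`.
  exact ⟨E.a - 2 * e * E.b,
    by linear_combination (-1 - 4 * e) * hq + e * (1 - 2 * E.a - E.b) * hb⟩

theorem exists_mem_maximalIdeal_sq_sub_self_eq_of_isStronglyCleanRing (hs : IsUnit s)
    (h : IsStronglyCleanRing (GenMatrix R s)) (e : R) (he : e ∈ maximalIdeal R) :
    ∃ y ∈ maximalIdeal R, y ^ 2 - y = e := by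
  have hc : s * (↑hs.unit⁻¹ * e) = e := by rw [← mul_assoc, hs.mul_val_inv, one_mul]
  obtain ⟨y, hy⟩ := exists_sq_sub_self_eq_of_isStronglyClean hc he (h _)
  exact exists_mem_maximalIdeal_sq_sub_self_eq he hy

theorem isQuasipolar_of_tr_mem_of_dets_mem {A : GenMatrix R s} (ht : tr A ∈ maximalIdeal R)
    (hd : dets A ∈ maximalIdeal R) : IsQuasipolar A := by
  have hAA : A * A ∈ entrywise (maximalIdeal R) := by
    rw [mul_self_eq_scalar_tr_mul_sub_scalar_dets]
    exact TwoSidedIdeal.sub_mem _ (TwoSidedIdeal.mul_mem_right _ _ _ (scalar_mem_entrywise ht))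
      (scalar_mem_entrywise hd)
  exact (isQuasinilpotent_of_forall_isUnit_one_add_mul_self_mul fun x =>
    isUnit_one_add_of_mem_entrywise (TwoSidedIdeal.mul_mem_right _ _ _ hAA)).isQuasipolar

theorem isQuasipolar_of_eigenvalues {A : GenMatrix R s} {α β : R} (hα : α ∈ maximalIdeal R)
    (hβ : IsUnit β) (hsum : α + β = tr A) (hprod : α * β = dets A) : IsQuasipolar A := by
  have hαβ : IsUnit (α - β) := by
    simpa [neg_add_eq_sub] using isUnit_add_of_mem_maximalIdeal hβ.neg hα
  obtain ⟨l, hl⟩ := hαβ.exists_left_inv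
  have hCH : (A - scalar α) * (A - scalar β) = 0 := by
    calc (A - scalar α) * (A - scalar β) = A * A - (scalar (α + β) * A - scalar (α * β)) := by
          simp only [map_add, map_mul, sub_mul, mul_sub, add_mul, (commute_scalar β A).eq]
          abel
      _ = 0 := by rw [hsum, hprod, mul_self_eq_scalar_tr_mul_sub_scalar_dets, sub_self]
  set p : GenMatrix R s := scalar l * (A - scalar β) with hp
  have hA : A = scalar β + scalar (α - β) * p := by
    rw [hp, ← mul_assoc, ← map_mul, mul_comm, hl, map_one, one_mul, add_sub_cancel]
  have hAp : A * p = scalar α * p := by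
    rw [← sub_eq_zero, ← sub_mul, hp, (commute_scalar l _).symm.left_comm, hCH, mul_zero]
  have hidem : IsIdempotentElem p :=
    calc p * p = scalar l * (A * p - scalar β * p) := by nth_rw 1 [hp]; rw [mul_assoc, sub_mul]
      _ = scalar l * (scalar (α - β) * p) := by rw [hAp, ← sub_mul, ← map_sub]
      _ = p := by rw [← mul_assoc, ← map_mul, hl, map_one, one_mul]
  refine ⟨p, hidem, fun y hy => ?_, ?_, fun x _ => ?_⟩
  · have hAy : Commute (A - scalar β) y :=
      (show Commute y A from hy).symm.sub_left (commute_scalar β y)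
    exact ((commute_scalar l y).mul_left hAy).eq
  · have hdecomp : A + p = scalar β * (1 - p) + scalar (1 + α) * p := by
      conv_lhs => rw [hA]
      simp only [map_sub, map_add, map_one, sub_mul, mul_sub, add_mul, one_mul, mul_one]
      abel
    rw [hdecomp]
    exact isUnit_mul_one_sub_add_mul hidem (hβ.map scalar)
      ((isUnit_add_of_mem_maximalIdeal isUnit_one hα).map scalar) (commute_scalar _ _)
      (commute_scalar _ _)
  · rw [hAp, mul_assoc]
    exact isUnit_one_add_of_mem_entrywise
      (TwoSidedIdeal.mul_mem_right _ _ _ (scalar_mem_entrywise hα))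

theorem isQuasipolar_of_isUnit_tr
    (hroot : ∀ e ∈ maximalIdeal R, ∃ y ∈ maximalIdeal R, y ^ 2 - y = e) {A : GenMatrix R s}
    (ht : IsUnit (tr A)) (hd : dets A ∈ maximalIdeal R) : IsQuasipolar A := by
  -- the eigenvalues are `tr A` times the roots of `z ^ 2 - z + dets A / tr A ^ 2`
  obtain ⟨t', ht'⟩ := ht.exists_left_inv
  obtain ⟨y, hy, hyroot⟩ := hroot (-(dets A * t' ^ 2)) (neg_mem (Ideal.mul_mem_right _ _ hd))
  have hy' : IsUnit (1 - y) := by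
    simpa [sub_eq_add_neg] using isUnit_add_of_mem_maximalIdeal isUnit_one (neg_mem hy)
  refine isQuasipolar_of_eigenvalues (α := tr A * y) (β := tr A * (1 - y))
    (Ideal.mul_mem_left _ _ hy) (ht.mul hy') (by ring) ?_
  linear_combination -(tr A ^ 2) * hyroot + dets A * (t' * tr A + 1) * ht'

end IsLocalRing

end GenMatrix

/-- over a commutative local ring `R` with `s` a unit, `K_s(R)` is quasipolar
iff `K_s(R)` is strongly clean. -/
theorem genMatrix_isQuasipolarRing_iff_isStronglyCleanRing {R : Type*} [CommRing R]
    [IsLocalRing R] (s : R) (hs : IsUnit s) :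
    IsQuasipolarRing (GenMatrix R s) ↔ IsStronglyCleanRing (GenMatrix R s) := by
  refine ⟨fun h A => (h A).isStronglyClean, fun h A => ?_⟩
  by_cases hd : IsUnit A.dets
  · exact (GenMatrix.isUnit_iff_isUnit_dets.mpr hd).isQuasipolar
  have hd' : A.dets ∈ IsLocalRing.maximalIdeal R := (IsLocalRing.mem_maximalIdeal _).mpr hd
  by_cases ht : IsUnit A.tr
  · exact GenMatrix.isQuasipolar_of_isUnit_tr
      (GenMatrix.exists_mem_maximalIdeal_sq_sub_self_eq_of_isStronglyCleanRing hs h) ht hd'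
  · exact GenMatrix.isQuasipolar_of_tr_mem_of_dets_mem
      ((IsLocalRing.mem_maximalIdeal _).mpr ht) hd'
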